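/- Suppose X = U ∪ V with U,V path-connected open subsets and U ∩ V having m+1 path components A₀,…,A_m (m ≥ 1), with a_i ∈ A_i and Y = {a₀,…,a_m}. Then the square of restriction maps from H¹(X,Y;G) to H¹(U,Y;G) and H¹(V,Y;G), and from these to H¹(U∩V,Y;G), is commutative and cartesian; moreover H¹(U∩V,Y;G) is canonically in bijection with the product ∏_{i=0}^{m} H¹(A_i,a_i;G). -/

import Mathlib

/-- A `G`-valued 1-cocycle of the pair `(A, Y)`: a function on paths of `X` lying in `A`,
trivial on paths lying in `Y`, invariant under homotopies (rel endpoints) lying in `A`,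
and multiplicative under concatenation of paths. -/
structure NCocycle {X : Type} [TopologicalSpace X] (A Y : Set X) (G : Type) [Group G] where
  toFun : ∀ {x y : X} (p : Path x y), Set.range p ⊆ A → G
  triv : ∀ {x y : X} (p : Path x y) (hp : Set.range p ⊆ A),
    Set.range p ⊆ Y → toFun p hp = 1
  homotopy_inv : ∀ {x y : X} (p q : Path x y) (F : p.Homotopy q),
    Set.range F ⊆ A → ∀ (hp : Set.range p ⊆ A) (hq : Set.range q ⊆ A),
      toFun p hp = toFun q hq
  mul : ∀ {x y z : X} (p : Path x y) (q : Path y z)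
    (hpq : Set.range (p.trans q) ⊆ A) (hp : Set.range p ⊆ A) (hq : Set.range q ⊆ A),
      toFun (p.trans q) hpq = toFun p hp * toFun q hq

namespace NCocycle

variable {X : Type} [TopologicalSpace X] {G : Type} [Group G]

/-- Two cocycles of `(A, Y)` are cohomologous if they differ by the action
`(c • u)(p) = c(p 0) * u(p) * c(p 1)⁻¹` of a 0-cochain `c` trivial on `Y`. -/
def Cohom {A Y : Set X} (u v : NCocycle A Y G) : Prop :=
  ∃ c : X → G, (∀ y ∈ Y, c y = 1) ∧
    ∀ {x y : X} (p : Path x y) (hp : Set.range p ⊆ A),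
      v.toFun p hp = c x * u.toFun p hp * (c y)⁻¹

/-- The non-abelian cohomology set `H¹(A, Y; G)`. -/
def H1 {X : Type} [TopologicalSpace X] (A Y : Set X) (G : Type) [Group G] :=
  Quot (Cohom (A := A) (Y := Y) (G := G))

/-- Restriction of cocycles to a smaller pair. -/
def res {A A' Y Y' : Set X} (hA : A' ⊆ A) (hY : Y' ⊆ Y) (u : NCocycle A Y G) :
    NCocycle A' Y' G where
  toFun p hp := u.toFun p (hp.trans hA)
  triv p hp h := u.triv p (hp.trans hA) (h.trans hY)
  homotopy_inv p q F hF hp hq := u.homotopy_inv p q F (hF.trans hA) _ _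
  mul p q hpq hp hq := u.mul p q _ _ _

/-- Restriction map on cohomology sets. -/
def H1res {A A' Y Y' : Set X} (hA : A' ⊆ A) (hY : Y' ⊆ Y) :
    H1 A Y G → H1 A' Y' G :=
  Quot.lift (fun u => Quot.mk _ (res hA hY u))
    (fun u v ⟨c, hc, hcv⟩ => Quot.sound
      ⟨c, fun y hy => hc y (hY hy), fun p hp => hcv p (hp.trans hA)⟩)

end NCocycle

namespace NCocycle

variable {X : Type} [TopologicalSpace X] {G : Type} [Group G]

open Set unitInterval

theorem cohom_equivalence (A Y : Set X) :
    Equivalence (Cohom (A := A) (Y := Y) (G := G)) := by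
  constructor
  · intro u
    exact ⟨fun _ => 1, fun _ _ => rfl, fun p hp => by group⟩
  · rintro u v ⟨c, hc, hcv⟩
    refine ⟨fun z => (c z)⁻¹, fun y hy => by simp [hc y hy], fun p hp => ?_⟩
    rw [hcv p hp]; group
  · rintro u v w ⟨c, hc, hcv⟩ ⟨d, hd, hdv⟩
    refine ⟨fun z => d z * c z, fun y hy => by simp [hc y hy, hd y hy],
      fun p hp => ?_⟩
    rw [hdv p hp, hcv p hp]; group

theorem cohom_of_h1_eq {A Y : Set X} {u v : NCocycle A Y G}
    (h : (Quot.mk _ u : H1 A Y G) = Quot.mk _ v) : Cohom u v :=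
  ((cohom_equivalence A Y).eqvGen_iff).mp (Quot.eqvGen_exact h)

theorem toFun_congr {A Y : Set X} (u : NCocycle A Y G) {x₁ y₁ x₂ y₂ : X}
    (p₁ : Path x₁ y₁) (p₂ : Path x₂ y₂) (hc : ∀ t, p₁ t = p₂ t)
    (h₁ : Set.range p₁ ⊆ A) (h₂ : Set.range p₂ ⊆ A) :
    u.toFun p₁ h₁ = u.toFun p₂ h₂ := by
  have hx : x₁ = x₂ := by rw [← p₁.source, ← p₂.source]; exact hc 0
  subst hx
  have hy : y₁ = y₂ := by rw [← p₁.target, ← p₂.target]; exact hc 1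
  subst hy
  have : p₁ = p₂ := by ext t; exact hc t
  subst this; rfl

theorem toFun_const {A Y : Set X} (u : NCocycle A Y G) {x' y' : X}
    (r : Path x' y') (z : X) (hr : ∀ t, r t = z) (h : Set.range r ⊆ A) :
    u.toFun r h = 1 := by
  have hx : x' = z := by rw [← r.source]; exact hr 0
  subst hx
  have hy : y' = x' := by rw [← r.target]; exact hr 1
  subst hy
  have h2 : Set.range (r.trans r) ⊆ A := by
    rw [Path.trans_range]; exact Set.union_subset h h
  have e : u.toFun (r.trans r) h2 = u.toFun r h := by
    refine toFun_congr u _ _ (fun t => ?_) _ _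
    rw [Path.trans_apply]
    split <;> simp [hr]
  have := u.mul r r h2 h h
  rw [e] at this
  exact (left_eq_mul.mp this)

/-- The affine cut of a path along a real interval `[a, b]`. -/
noncomputable def affineCut {x y : X} (p : Path x y) (a b : ℝ) : Path (p.extend a) (p.extend b) where
  toFun s := p.extend (a + s * (b - a))
  continuous_toFun := p.continuous_extend.comp (by fun_prop)
  source' := by simp
  target' := by norm_num

@[simp] theorem affineCut_apply {x y : X} (p : Path x y) (a b : ℝ) (s : I) :
    affineCut p a b s = p.extend (a + s * (b - a)) := rfl

theorem range_affineCut {x y : X} (p : Path x y) (a b : ℝ) :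
    Set.range (affineCut p a b) ⊆ Set.range p := by
  rintro z ⟨s, rfl⟩
  rw [← p.extend_range]
  exact Set.mem_range_self _

/-- The key deformation lemma: two paths which factor through a convex region
are assigned the same value by any cocycle. -/
theorem seg {A Y : Set X} (u : NCocycle A Y G) {E : Type} [AddCommGroup E] [Module ℝ E]
    [TopologicalSpace E] [IsTopologicalAddGroup E] [ContinuousSMul ℝ E]
    {f : E → X} (hf : Continuous f) {K : Set E} (hK : Convex ℝ K)
    (hfK : ∀ e ∈ K, f e ∈ A) {g₀ g₁ : I → E} (hg₀ : Continuous g₀) (hg₁ : Continuous g₁)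
    (hg₀K : ∀ t, g₀ t ∈ K) (hg₁K : ∀ t, g₁ t ∈ K)
    (h0 : g₀ 0 = g₁ 0) (h1 : g₀ 1 = g₁ 1) {x y : X} {q₀ q₁ : Path x y}
    (e₀ : ∀ t, q₀ t = f (g₀ t)) (e₁ : ∀ t, q₁ t = f (g₁ t))
    (h₀ : Set.range q₀ ⊆ A) (h₁ : Set.range q₁ ⊆ A) :
    u.toFun q₀ h₀ = u.toFun q₁ h₁ := by
  have hcomb : ∀ s t : I, ((1 : ℝ) - s) • g₀ t + (s : ℝ) • g₁ t ∈ K := fun s t =>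
    hK (hg₀K t) (hg₁K t) (by linarith [s.2.2]) s.2.1 (by ring)
  let F : Path.Homotopy q₀ q₁ :=
    { toFun := fun st => f (((1 : ℝ) - st.1) • g₀ st.2 + (st.1 : ℝ) • g₁ st.2)
      continuous_toFun := by fun_prop
      map_zero_left := fun t => by simp [e₀ t]
      map_one_left := fun t => by simp [e₁ t]
      prop' := by
        intro s t ht
        simp only [ContinuousMap.coe_mk, Path.coe_toContinuousMap]
        rcases ht with h | h
        · subst h
          rw [← h0, ← add_smul, sub_add_cancel, one_smul, ← e₀]
        · simp only [Set.mem_singleton_iff] at h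
          subst h
          rw [h1, ← add_smul, sub_add_cancel, one_smul, ← e₁, q₁.target, q₀.target] }
  have hF : Set.range F ⊆ A := by
    rintro z ⟨⟨s, t⟩, rfl⟩
    exact hfK _ (hcomb s t)
  exact u.homotopy_inv q₀ q₁ F hF h₀ h₁

end NCocycle
namespace NCocycle

variable {X : Type} [TopologicalSpace X] {G : Type} [Group G]

open Set unitInterval

/-- An ordered product `g 0 * g 1 * ⋯ * g (n-1)`. -/
def listProd (g : ℕ → G) (n : ℕ) : G := ((List.range n).map g).prod

@[simp] theorem listProd_zero (g : ℕ → G) : listProd g 0 = 1 := rfl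

theorem listProd_succ (g : ℕ → G) (n : ℕ) :
    listProd g (n + 1) = listProd g n * g n := by
  simp [listProd, List.range_succ]

theorem listProd_congr {g h : ℕ → G} {n : ℕ} (he : ∀ i < n, g i = h i) :
    listProd g n = listProd h n := by
  induction n with
  | zero => rfl
  | succ n ih =>
    rw [listProd_succ, listProd_succ, ih (fun i hi => he i (by omega)), he n (by omega)]

theorem listProd_add (g : ℕ → G) (a b : ℕ) :
    listProd g (a + b) = listProd g a * listProd (fun i => g (a + i)) b := by
  induction b with
  | zero => simp
  | succ b ih => rw [← Nat.add_assoc, listProd_succ, ih, listProd_succ, mul_assoc]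

theorem listProd_mul (g : ℕ → G) (n k : ℕ) :
    listProd g (n * k) = listProd (fun i => listProd (fun j => g (i * k + j)) k) n := by
  induction n with
  | zero => simp
  | succ n ih =>
    rw [Nat.succ_mul, listProd_add, ih, listProd_succ]

theorem listProd_one_of {g : ℕ → G} {n : ℕ} (h : ∀ i < n, g i = 1) :
    listProd g n = 1 := by
  induction n with
  | zero => rfl
  | succ n ih =>
    rw [listProd_succ, ih (fun i hi => h i (by omega)), h n (by omega), one_mul]

@[simp] theorem coeI_mk (a : ℝ) (h : a ∈ unitInterval) : ((⟨a, h⟩ : unitInterval) : ℝ) = a := rfl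

theorem listProd_telescope {d g e : ℕ → G} {n : ℕ}
    (h : ∀ i < n, g i = d i * e i * (d (i + 1))⁻¹) :
    listProd g n = d 0 * listProd e n * (d n)⁻¹ := by
  induction n with
  | zero => simp
  | succ n ih =>
    rw [listProd_succ, listProd_succ, ih (fun i hi => h i (by omega)), h n (by omega)]
    group

/-- Subdividing a path into `k` equal affine pieces multiplies the cocycle values. -/
theorem subdiv {A Y : Set X} (u : NCocycle A Y G) {x y : X} (q : Path x y)
    (hq : Set.range q ⊆ A) (k : ℕ) (hk : 0 < k) :
    u.toFun q hq = listProd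
      (fun j => u.toFun (affineCut q ((j : ℝ) / k) (((j : ℝ) + 1) / k))
        ((range_affineCut q _ _).trans hq)) k := by
  have hk' : (k : ℝ) ≠ 0 := Nat.cast_ne_zero.mpr hk.ne'
  have hext : ∀ e ∈ (Set.univ : Set ℝ), q.extend e ∈ A := fun e _ => by
    rw [← q.extend_range] at hq
    exact hq (Set.mem_range_self e)
  have key : ∀ j : ℕ, j ≤ k →
      u.toFun q hq = listProd
        (fun j => u.toFun (affineCut q ((j : ℝ) / k) (((j : ℝ) + 1) / k))
          ((range_affineCut q _ _).trans hq)) j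
        * u.toFun (affineCut q ((j : ℝ) / k) 1) ((range_affineCut q _ _).trans hq) := by
    intro j hj
    induction j with
    | zero =>
      rw [listProd_zero, one_mul]
      refine toFun_congr u _ _ (fun t => ?_) _ _
      rw [affineCut_apply]
      rw [show ((0 : ℕ) : ℝ) / k + t * (1 - ((0 : ℕ) : ℝ) / k) = (t : ℝ) by push_cast; ring]
      exact (q.extend_extends' t).symm
    | succ j ih =>
      rw [ih (by omega), listProd_succ, mul_assoc]
      congr 1
      set c₁ : Path (q.extend ((j : ℝ) / k)) (q.extend (((j : ℝ) + 1) / k)) :=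
        affineCut q ((j : ℝ) / k) (((j : ℝ) + 1) / k) with hc₁
      set c₂ : Path (q.extend (((j : ℝ) + 1) / k)) (q.extend 1) :=
        affineCut q (((j : ℝ) + 1) / k) 1 with hc₂
      have htrans : Set.range (c₁.trans c₂) ⊆ A := by
        rw [Path.trans_range]
        exact Set.union_subset ((range_affineCut q _ _).trans hq)
          ((range_affineCut q _ _).trans hq)
      have hseg : u.toFun (affineCut q ((j : ℝ) / k) 1) ((range_affineCut q _ _).trans hq)
          = u.toFun (c₁.trans c₂) htrans := by
        refine seg u q.continuous_extend convex_univ hext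
          (g₀ := fun t => (j : ℝ) / k + t * (1 - (j : ℝ) / k))
          (g₁ := fun t => (j : ℝ) / k + min (2 * (t : ℝ)) 1 * (1 / k)
            + max (2 * (t : ℝ) - 1) 0 * (1 - ((j : ℝ) + 1) / k))
          (by fun_prop) (by fun_prop) (fun _ => trivial) (fun _ => trivial)
          (by norm_num) (by push_cast; rw [min_eq_right (by norm_num), max_eq_left (by norm_num)]; field_simp; ring) (fun t => rfl) (fun t => ?_) _ _
        rw [Path.trans_apply]
        split
        · next h =>
          have h2 : 2 * (t : ℝ) ≤ 1 := by
            have : (t : ℝ) ≤ 1 / 2 := h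
            linarith
          beta_reduce
          rw [hc₁, affineCut_apply, coeI_mk, min_eq_left h2, max_eq_right (by linarith)]
          congr 1
          ring
        · next h =>
          have h2 : (1 : ℝ) ≤ 2 * t := by
            have : ¬ (t : ℝ) ≤ 1 / 2 := h
            linarith [not_le.mp this]
          beta_reduce
          rw [hc₂, affineCut_apply, coeI_mk, min_eq_right h2, max_eq_left (by linarith)]
          congr 1
          ring
      rw [hseg, u.mul c₁ c₂ htrans ((range_affineCut q _ _).trans hq)
        ((range_affineCut q _ _).trans hq)]
      congr 1
      refine toFun_congr u _ _ (fun t => ?_) _ _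
      rw [hc₂, affineCut_apply, affineCut_apply]
      congr 1
      push_cast
      ring
  have last : u.toFun (affineCut q ((k : ℝ) / k) 1) ((range_affineCut q _ _).trans hq) = 1 := by
    refine toFun_const u _ (q.extend 1) (fun t => ?_) _
    rw [affineCut_apply]
    congr 1
    rw [div_self hk']
    ring
  rw [key k le_rfl, last, mul_one]

end NCocycle
namespace NCocycle

variable {X : Type} [TopologicalSpace X] {G : Type} [Group G]

open Set unitInterval

section Glue

variable {U V YY : Set X}

open scoped Classical in
/-- The combined value of a pair of cocycles on `U` and on `V`. -/
noncomputable def pval (u : NCocycle U YY G) (v : NCocycle V YY G) {x y : X}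
    (q : Path x y) : G :=
  if hU : Set.range q ⊆ U then u.toFun q hU
  else if hV : Set.range q ⊆ V then v.toFun q hV
  else 1

/-- Agreement of two cocycles on the overlap. -/
def Agrees (u : NCocycle U YY G) (v : NCocycle V YY G) : Prop :=
  ∀ {x y : X} (q : Path x y) (hU : Set.range q ⊆ U) (hV : Set.range q ⊆ V),
    u.toFun q hU = v.toFun q hV

variable {u : NCocycle U YY G} {v : NCocycle V YY G}

theorem pval_u {x y : X} (q : Path x y) (hU : Set.range q ⊆ U) :
    pval u v q = u.toFun q hU := dif_pos hU

theorem pval_v (hagree : Agrees u v) {x y : X} (q : Path x y) (hV : Set.range q ⊆ V) :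
    pval u v q = v.toFun q hV := by
  by_cases hU : Set.range q ⊆ U
  · rw [pval_u q hU]; exact hagree q hU hV
  · rw [pval, dif_neg hU, dif_pos hV]

theorem pval_congr {x₁ y₁ x₂ y₂ : X} (q₁ : Path x₁ y₁) (q₂ : Path x₂ y₂)
    (hc : ∀ t, q₁ t = q₂ t) : pval u v q₁ = pval u v q₂ := by
  have hr : Set.range q₁ = Set.range q₂ :=
    congrArg Set.range (funext hc)
  by_cases hU : Set.range q₁ ⊆ U
  · rw [pval_u q₁ hU, pval_u q₂ (hr ▸ hU)]
    exact toFun_congr u _ _ hc _ _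
  · by_cases hV : Set.range q₁ ⊆ V
    · rw [pval, dif_neg hU, dif_pos hV, pval, dif_neg (hr ▸ hU), dif_pos (hr ▸ hV)]
      exact toFun_congr v _ _ hc _ _
    · rw [pval, dif_neg hU, dif_neg hV, pval, dif_neg (hr ▸ hU), dif_neg (hr ▸ hV)]

theorem pval_const (hcover : ∀ z : X, z ∈ U ∨ z ∈ V) {x' y' : X} (q : Path x' y')
    (z : X) (h : ∀ t, q t = z) : pval u v q = 1 := by
  have hrange : Set.range q ⊆ {z} := by rintro w ⟨t, rfl⟩; exact h t
  by_cases hU : Set.range q ⊆ U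
  · rw [pval_u q hU]; exact toFun_const u _ z h _
  · have hV : Set.range q ⊆ V := by
      rcases hcover z with hz | hz
      · exact absurd (hrange.trans (Set.singleton_subset_iff.mpr hz)) hU
      · exact hrange.trans (Set.singleton_subset_iff.mpr hz)
    rw [pval, dif_neg hU, dif_pos hV]; exact toFun_const v _ z h _

/-- A subdivision into `n` affine pieces, each lying in `U` or in `V`. -/
def good (U V : Set X) {x y : X} (p : Path x y) (n : ℕ) : Prop :=
  0 < n ∧ ∀ i < n,
    Set.range (affineCut p ((i : ℝ) / n) (((i : ℝ) + 1) / n)) ⊆ U ∨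
    Set.range (affineCut p ((i : ℝ) / n) (((i : ℝ) + 1) / n)) ⊆ V

/-- The product of combined values over a subdivision. -/
noncomputable def Sval (u : NCocycle U YY G) (v : NCocycle V YY G) {x y : X}
    (p : Path x y) (n : ℕ) : G :=
  listProd (fun i => pval u v (affineCut p ((i : ℝ) / n) (((i : ℝ) + 1) / n))) n

theorem piece_piece {x y : X} (p : Path x y) {n k : ℕ} (hn : 0 < n) (hk : 0 < k)
    {i j : ℕ} (hj : j < k) (t : I) :
    affineCut p ((↑(i * k + j) : ℝ) / ↑(n * k)) ((↑(i * k + j) + 1) / ↑(n * k)) t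
      = affineCut (affineCut p ((i : ℝ) / n) (((i : ℝ) + 1) / n))
          ((j : ℝ) / k) (((j : ℝ) + 1) / k) t := by
  have hn' : (n : ℝ) ≠ 0 := Nat.cast_ne_zero.mpr hn.ne'
  have hk' : (k : ℝ) ≠ 0 := Nat.cast_ne_zero.mpr hk.ne'
  have hk0 : (0 : ℝ) < k := by positivity
  rw [affineCut_apply, affineCut_apply]
  have hd : ((j : ℝ) + 1) / k - (j : ℝ) / k = 1 / k := by field_simp; ring
  have harg : (j : ℝ) / k + t * (((j : ℝ) + 1) / k - (j : ℝ) / k) ∈ Set.Icc (0 : ℝ) 1 := by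
    have h1 : (j : ℝ) + 1 ≤ k := by exact_mod_cast hj
    have ht1 : (t : ℝ) ≤ 1 := t.2.2
    have ht0 : (0 : ℝ) ≤ t := t.2.1
    rw [hd]
    constructor
    · positivity
    · rw [show (j : ℝ) / k + t * (1 / k) = ((j : ℝ) + t) / k from by ring, div_le_one hk0]
      linarith
  rw [Path.extend_apply _ harg, affineCut_apply]
  congr 1
  push_cast
  field_simp
  ring

theorem range_piece_piece {x y : X} (p : Path x y) {n k : ℕ} (hn : 0 < n) (hk : 0 < k)
    {i j : ℕ} (hj : j < k) :
    Set.range (affineCut p ((↑(i * k + j) : ℝ) / ↑(n * k)) ((↑(i * k + j) + 1) / ↑(n * k)))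
      ⊆ Set.range (affineCut p ((i : ℝ) / n) (((i : ℝ) + 1) / n)) := by
  rintro w ⟨t, rfl⟩
  rw [piece_piece p hn hk hj t]
  exact range_affineCut _ _ _ (Set.mem_range_self t)

theorem good_mul {x y : X} {p : Path x y} {n : ℕ} (h : good U V p n) {k : ℕ} (hk : 0 < k) :
    good U V p (n * k) := by
  refine ⟨Nat.mul_pos h.1 hk, fun l hl => ?_⟩
  have hj : l % k < k := Nat.mod_lt _ hk
  have hi : l / k < n := Nat.div_lt_of_lt_mul (by rwa [mul_comm] at hl)
  have hl' : l = l / k * k + l % k := by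
    have h := Nat.div_add_mod l k
    rw [Nat.mul_comm] at h
    omega
  rw [hl']
  rcases h.2 (l / k) hi with hU | hU
  · exact Or.inl ((range_piece_piece p h.1 hk hj).trans hU)
  · exact Or.inr ((range_piece_piece p h.1 hk hj).trans hU)

theorem Sval_mul (hagree : Agrees u v) {x y : X} {p : Path x y} {n : ℕ}
    (h : good U V p n) {k : ℕ} (hk : 0 < k) :
    Sval u v p n = Sval u v p (n * k) := by
  rw [Sval, Sval, listProd_mul]
  refine listProd_congr fun i hi => ?_
  rcases h.2 i hi with hW | hW
  · rw [pval_u _ hW, subdiv u _ hW k hk]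
    refine listProd_congr fun j hj => ?_
    have hsub : Set.range (affineCut p ((↑(i * k + j) : ℝ) / ↑(n * k))
        ((↑(i * k + j) + 1) / ↑(n * k))) ⊆ U :=
      (range_piece_piece p h.1 hk hj).trans hW
    rw [pval_u _ hsub]
    exact toFun_congr u _ _ (fun t => (piece_piece p h.1 hk hj t).symm) _ _
  · rw [pval_v hagree _ hW, subdiv v _ hW k hk]
    refine listProd_congr fun j hj => ?_
    have hsub : Set.range (affineCut p ((↑(i * k + j) : ℝ) / ↑(n * k))
        ((↑(i * k + j) + 1) / ↑(n * k))) ⊆ V :=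
      (range_piece_piece p h.1 hk hj).trans hW
    rw [pval_v hagree _ hsub]
    exact toFun_congr v _ _ (fun t => (piece_piece p h.1 hk hj t).symm) _ _

theorem Sval_indep (hagree : Agrees u v) {x y : X} {p : Path x y} {n m : ℕ}
    (hn : good U V p n) (hm : good U V p m) :
    Sval u v p n = Sval u v p m := by
  rw [Sval_mul hagree hn hm.1, Sval_mul hagree hm hn.1 (k := n), Nat.mul_comm]

theorem exists_good (hUo : IsOpen U) (hVo : IsOpen V)
    (hcover : ∀ z : X, z ∈ U ∨ z ∈ V) {x y : X} (p : Path x y) :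
    ∃ n : ℕ, good U V p (n + 1) := by
  classical
  set c : Bool → Set I := fun b => if b then ⇑p ⁻¹' U else ⇑p ⁻¹' V with hc
  have hc₁ : ∀ b, IsOpen (c b) := by
    intro b
    cases b <;> simp only [hc, if_true, if_false, Bool.false_eq_true] <;>
      [exact hVo.preimage p.continuous; exact hUo.preimage p.continuous]
  have hc₂ : (Set.univ : Set I) ⊆ ⋃ b, c b := by
    intro z _
    rcases hcover (p z) with hz | hz
    · exact Set.mem_iUnion.mpr ⟨true, by simpa [hc] using hz⟩
    · exact Set.mem_iUnion.mpr ⟨false, by simpa [hc] using hz⟩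
  obtain ⟨δ, hδ, hball⟩ := lebesgue_number_lemma_of_metric isCompact_univ hc₁ hc₂
  obtain ⟨n, hn⟩ := exists_nat_one_div_lt hδ
  refine ⟨n, Nat.succ_pos n, fun i hi => ?_⟩
  set N : ℝ := ((n + 1 : ℕ) : ℝ) with hN
  have hN0 : (0 : ℝ) < N := by rw [hN]; positivity
  have hiN : (i : ℝ) / N ∈ unitInterval := by
    constructor
    · positivity
    · rw [div_le_one hN0, hN]
      exact_mod_cast hi.le
  obtain ⟨b, hb⟩ := hball ⟨(i : ℝ) / N, hiN⟩ trivial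
  have hd : ((i : ℝ) + 1) / N - (i : ℝ) / N = 1 / N := by field_simp; ring
  have harg : ∀ t : I, (i : ℝ) / N + t * (((i : ℝ) + 1) / N - (i : ℝ) / N)
      ∈ Set.Icc (0 : ℝ) 1 := by
    intro t
    have h1 : ((i : ℝ) + 1) ≤ N := by rw [hN]; push_cast; exact_mod_cast hi
    have ht0 : (0 : ℝ) ≤ t := t.2.1
    have ht1 : (t : ℝ) ≤ 1 := t.2.2
    rw [hd]
    constructor
    · positivity
    · rw [show (i : ℝ) / N + t * (1 / N) = ((i : ℝ) + t) / N from by ring, div_le_one hN0]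
      linarith
  have hmem : ∀ t : I, (⟨_, harg t⟩ : I) ∈ Metric.ball (⟨(i : ℝ) / N, hiN⟩ : I) δ := by
    intro t
    rw [Metric.mem_ball, Subtype.dist_eq, Real.dist_eq, coeI_mk, coeI_mk, hd]
    have ht0 : (0 : ℝ) ≤ t := t.2.1
    have ht1 : (t : ℝ) ≤ 1 := t.2.2
    rw [show (i : ℝ) / N + ↑t * (1 / N) - (i : ℝ) / N = ↑t * (1 / N) from by ring,
      abs_of_nonneg (by positivity)]
    calc (t : ℝ) * (1 / N) ≤ 1 * (1 / N) := by
          apply mul_le_mul_of_nonneg_right ht1 (by positivity)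
      _ = 1 / N := one_mul _
      _ < δ := by rw [hN]; push_cast; exact hn
  have hval : ∀ t : I, affineCut p ((i : ℝ) / N) (((i : ℝ) + 1) / N) t = p ⟨_, harg t⟩ := by
    intro t
    rw [affineCut_apply, Path.extend_apply _ (harg t)]
  cases b
  · refine Or.inr ?_
    rintro w ⟨t, rfl⟩
    have hmem' := hb (hmem t)
    simp only [hc, Bool.false_eq_true, if_false] at hmem'
    rw [hval t]
    exact hmem'
  · refine Or.inl ?_
    rintro w ⟨t, rfl⟩
    have hmem' := hb (hmem t)
    simp only [hc, if_true] at hmem'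
    rw [hval t]
    exact hmem'

open scoped Classical in
/-- The glued value of a path, using an arbitrary adapted subdivision. -/
noncomputable def glue (u : NCocycle U YY G) (v : NCocycle V YY G) (hUo : IsOpen U) (hVo : IsOpen V)
    (hcover : ∀ z : X, z ∈ U ∨ z ∈ V) {x y : X} (p : Path x y) : G :=
  Sval u v p (Nat.find (exists_good hUo hVo hcover p) + 1)

open scoped Classical in
theorem glue_eq_Sval (hUo : IsOpen U) (hVo : IsOpen V)
    (hcover : ∀ z : X, z ∈ U ∨ z ∈ V) (hagree : Agrees u v) {x y : X} (p : Path x y)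
    {n : ℕ} (hn : good U V p n) : glue u v hUo hVo hcover p = Sval u v p n :=
  Sval_indep hagree (Nat.find_spec (exists_good hUo hVo hcover p)) hn

theorem Sval_one_u {x y : X} (p : Path x y) (hU : Set.range p ⊆ U)
    (hp : Set.range p ⊆ U) : Sval u v p 1 = u.toFun p hp := by
  rw [Sval, show (1 : ℕ) = 0 + 1 from rfl, listProd_succ, listProd_zero, one_mul]
  have hc : ∀ t : I, affineCut p ((0 : ℕ) / (1 : ℕ) : ℝ)
      ((((0 : ℕ) : ℝ) + 1) / ((1 : ℕ) : ℝ)) t = p t := by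
    intro t
    rw [affineCut_apply,
      show ((0 : ℕ) : ℝ) / ((1:ℕ) : ℝ) + t * ((((0:ℕ) : ℝ) + 1) / ((1:ℕ) : ℝ)
        - ((0:ℕ) : ℝ) / ((1:ℕ) : ℝ)) = (t : ℝ) from by push_cast; ring]
    exact p.extend_extends' t
  have hsub : Set.range (affineCut p (((0:ℕ) : ℝ) / ((1:ℕ) : ℝ))
      ((((0:ℕ) : ℝ) + 1) / ((1:ℕ) : ℝ))) ⊆ U := (range_affineCut _ _ _).trans hU
  rw [pval_u _ hsub]
  exact toFun_congr u _ _ hc _ _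

theorem good_one_of_u {x y : X} (p : Path x y) (hU : Set.range p ⊆ U) : good U V p 1 :=
  ⟨Nat.one_pos, fun i _ => Or.inl ((range_affineCut _ _ _).trans hU)⟩

theorem good_one_of_v {x y : X} (p : Path x y) (hV : Set.range p ⊆ V) : good U V p 1 :=
  ⟨Nat.one_pos, fun i _ => Or.inr ((range_affineCut _ _ _).trans hV)⟩

theorem Sval_one_v (hagree : Agrees u v) {x y : X} (p : Path x y)
    (hp : Set.range p ⊆ V) : Sval u v p 1 = v.toFun p hp := by
  rw [Sval, show (1 : ℕ) = 0 + 1 from rfl, listProd_succ, listProd_zero, one_mul]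
  have hc : ∀ t : I, affineCut p ((0 : ℕ) / (1 : ℕ) : ℝ)
      ((((0 : ℕ) : ℝ) + 1) / ((1 : ℕ) : ℝ)) t = p t := by
    intro t
    rw [affineCut_apply,
      show ((0 : ℕ) : ℝ) / ((1:ℕ) : ℝ) + t * ((((0:ℕ) : ℝ) + 1) / ((1:ℕ) : ℝ)
        - ((0:ℕ) : ℝ) / ((1:ℕ) : ℝ)) = (t : ℝ) from by push_cast; ring]
    exact p.extend_extends' t
  have hsub : Set.range (affineCut p (((0:ℕ) : ℝ) / ((1:ℕ) : ℝ))
      ((((0:ℕ) : ℝ) + 1) / ((1:ℕ) : ℝ))) ⊆ V := (range_affineCut _ _ _).trans hp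
  rw [pval_v hagree _ hsub]
  exact toFun_congr v _ _ hc _ _

open scoped Classical in
theorem glue_onU (hUo : IsOpen U) (hVo : IsOpen V)
    (hcover : ∀ z : X, z ∈ U ∨ z ∈ V) (hagree : Agrees u v) {x y : X} (p : Path x y)
    (hp : Set.range p ⊆ U) : glue u v hUo hVo hcover p = u.toFun p hp := by
  rw [glue_eq_Sval hUo hVo hcover hagree p (good_one_of_u p hp)]
  exact Sval_one_u p hp hp

open scoped Classical in
theorem glue_onV (hUo : IsOpen U) (hVo : IsOpen V)
    (hcover : ∀ z : X, z ∈ U ∨ z ∈ V) (hagree : Agrees u v) {x y : X} (p : Path x y)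
    (hp : Set.range p ⊆ V) : glue u v hUo hVo hcover p = v.toFun p hp := by
  rw [glue_eq_Sval hUo hVo hcover hagree p (good_one_of_v p hp)]
  exact Sval_one_v hagree p hp

end Glue

end NCocycle
namespace NCocycle

variable {X : Type} [TopologicalSpace X] {G : Type} [Group G]

open Set unitInterval

theorem trans_extend_left {x y z : X} (p : Path x y) (q : Path y z) {r : ℝ}
    (h0 : 0 ≤ r) (h2 : r ≤ 1 / 2) : (p.trans q).extend r = p.extend (2 * r) := by
  have hr : r ∈ Set.Icc (0 : ℝ) 1 := ⟨h0, by linarith⟩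
  rw [Path.extend_apply _ hr, Path.trans_apply]
  simp only [coeI_mk]
  split
  · next h =>
    exact (Path.extend_apply _ ⟨by positivity, by linarith⟩).symm
  · next h =>
    exact absurd h2 h

theorem trans_extend_right {x y z : X} (p : Path x y) (q : Path y z) {r : ℝ}
    (h0 : 1 / 2 ≤ r) (h2 : r ≤ 1) : (p.trans q).extend r = q.extend (2 * r - 1) := by
  have hr : r ∈ Set.Icc (0 : ℝ) 1 := ⟨by linarith, h2⟩
  rw [Path.extend_apply _ hr, Path.trans_apply]
  simp only [coeI_mk]
  split
  · next h =>
    have hhalf : r = 1 / 2 := le_antisymm h h0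
    subst hhalf
    have h1 : (2 : ℝ) * (1 / 2) = 1 := by norm_num
    simp only [h1]
    rw [← Path.extend_apply, Path.extend_one,
      show (1 : ℝ) - 1 = 0 from by norm_num, Path.extend_zero]
  · next h =>
    exact (Path.extend_apply _ ⟨by linarith [not_le.mp h], by linarith⟩).symm

section Glue2

variable {U V YY : Set X} {u : NCocycle U YY G} {v : NCocycle V YY G}
variable (hUo : IsOpen U) (hVo : IsOpen V) (hcover : ∀ z : X, z ∈ U ∨ z ∈ V)

open scoped Classical in
theorem glue_triv (hagree : Agrees u v) (hYU : YY ⊆ U) {x y : X} (p : Path x y)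
    (hp : Set.range p ⊆ YY) : glue u v hUo hVo hcover p = 1 := by
  rw [glue_onU hUo hVo hcover hagree p (hp.trans hYU)]
  exact u.triv p _ hp

open scoped Classical in
theorem glue_trans (hagree : Agrees u v) {x y z : X} (p : Path x y) (q : Path y z) :
    glue u v hUo hVo hcover (p.trans q)
      = glue u v hUo hVo hcover p * glue u v hUo hVo hcover q := by
  obtain ⟨n₁, h₁⟩ := exists_good hUo hVo hcover p
  obtain ⟨n₂, h₂⟩ := exists_good hUo hVo hcover q
  set N : ℕ := (n₁ + 1) * (n₂ + 1) with hN
  have hNpos : 0 < N := by positivity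
  have hgp : good U V p N := good_mul h₁ (Nat.succ_pos n₂)
  have hgq : good U V q N := by
    rw [hN, Nat.mul_comm]
    exact good_mul h₂ (Nat.succ_pos n₁)
  have hN0 : (0 : ℝ) < (N : ℝ) := by exact_mod_cast hNpos
  have hM : ((N + N : ℕ) : ℝ) = 2 * (N : ℝ) := by push_cast; ring
  -- identification of the first N pieces
  have key₁ : ∀ i : ℕ, i < N → ∀ t : I,
      affineCut (p.trans q) ((i : ℝ) / ((N + N : ℕ) : ℝ)) (((i : ℝ) + 1) / ((N + N : ℕ) : ℝ)) t
        = affineCut p ((i : ℝ) / N) (((i : ℝ) + 1) / N) t := by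
    intro i hi t
    have hi1 : (i : ℝ) + 1 ≤ N := by exact_mod_cast hi
    have ht0 : (0 : ℝ) ≤ t := t.2.1
    have ht1 : (t : ℝ) ≤ 1 := t.2.2
    rw [affineCut_apply, affineCut_apply, hM]
    have hr : (i : ℝ) / (2 * N) + t * (((i : ℝ) + 1) / (2 * N) - (i : ℝ) / (2 * N))
        = ((i : ℝ) + t) / (2 * N) := by field_simp; ring
    have hb : ((i : ℝ) + t) / (2 * N) ≤ 1 / 2 := by
      rw [div_le_iff₀ (by positivity)]
      nlinarith
    rw [hr, trans_extend_left p q (by positivity) hb]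
    congr 1
    field_simp
    ring
  have key₂ : ∀ i : ℕ, i < N → ∀ t : I,
      affineCut (p.trans q) (((N + i : ℕ) : ℝ) / ((N + N : ℕ) : ℝ))
          ((((N + i : ℕ) : ℝ) + 1) / ((N + N : ℕ) : ℝ)) t
        = affineCut q ((i : ℝ) / N) (((i : ℝ) + 1) / N) t := by
    intro i hi t
    have hi1 : (i : ℝ) + 1 ≤ N := by exact_mod_cast hi
    have ht0 : (0 : ℝ) ≤ t := t.2.1
    have ht1 : (t : ℝ) ≤ 1 := t.2.2
    rw [affineCut_apply, affineCut_apply, hM]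
    have hNi : ((N + i : ℕ) : ℝ) = (N : ℝ) + i := by push_cast; ring
    rw [hNi]
    have hr : ((N : ℝ) + i) / (2 * N) + t * ((((N : ℝ) + i) + 1) / (2 * N)
        - ((N : ℝ) + i) / (2 * N)) = ((N : ℝ) + (i : ℝ) + t) / (2 * N) := by
      field_simp; ring
    have hb1 : (1 : ℝ) / 2 ≤ ((N : ℝ) + i + t) / (2 * N) := by
      rw [le_div_iff₀ (by positivity)]
      nlinarith
    have hb2 : ((N : ℝ) + i + t) / (2 * N) ≤ 1 := by
      rw [div_le_one (by positivity)]
      nlinarith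
    rw [hr, trans_extend_right p q hb1 hb2]
    congr 1
    field_simp
    ring
  have hgood : good U V (p.trans q) (N + N) := by
    refine ⟨by omega, fun l hl => ?_⟩
    by_cases hlN : l < N
    · have he : Set.range (affineCut (p.trans q) ((l : ℝ) / ((N + N : ℕ) : ℝ))
          (((l : ℝ) + 1) / ((N + N : ℕ) : ℝ)))
          = Set.range (affineCut p ((l : ℝ) / N) (((l : ℝ) + 1) / N)) :=
        congrArg Set.range (funext (key₁ l hlN))
      rw [he]
      exact hgp.2 l hlN
    · obtain ⟨i, rfl⟩ : ∃ i, l = N + i := ⟨l - N, by omega⟩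
      have hiN : i < N := by omega
      have he : Set.range (affineCut (p.trans q) (((N + i : ℕ) : ℝ) / ((N + N : ℕ) : ℝ))
          ((((N + i : ℕ) : ℝ) + 1) / ((N + N : ℕ) : ℝ)))
          = Set.range (affineCut q ((i : ℝ) / N) (((i : ℝ) + 1) / N)) :=
        congrArg Set.range (funext (key₂ i hiN))
      rw [he]
      exact hgq.2 i hiN
  rw [glue_eq_Sval hUo hVo hcover hagree _ hgood,
    glue_eq_Sval hUo hVo hcover hagree _ hgp,
    glue_eq_Sval hUo hVo hcover hagree _ hgq,
    Sval, listProd_add]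
  congr 1
  · exact listProd_congr fun i hi => pval_congr _ _ (key₁ i hi)
  · exact listProd_congr fun i hi => pval_congr _ _ (key₂ i hi)

end Glue2

end NCocycle
namespace NCocycle

variable {X : Type} [TopologicalSpace X] {G : Type} [Group G]

open Set unitInterval

/-- Clamped evaluation of a map on the square. -/
noncomputable def fc (H : I × I → X) (a b : ℝ) : X :=
  H (Set.projIcc 0 1 zero_le_one a, Set.projIcc 0 1 zero_le_one b)

theorem continuous_fc {H : I × I → X} (hH : Continuous H) :
    Continuous fun e : ℝ × ℝ => fc H e.1 e.2 := by
  apply hH.comp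
  exact (continuous_projIcc.comp continuous_fst).prodMk
    (continuous_projIcc.comp continuous_snd)

theorem path_extend_eq_fc {x y : X} (p : Path x y) (r : ℝ) :
    p.extend r = p (Set.projIcc 0 1 zero_le_one r) := rfl

/-- Horizontal edge path of a grid. -/
noncomputable def hpath (H : I × I → X) (hH : Continuous H) (s t₀ t₁ : ℝ) :
    Path (fc H s t₀) (fc H s t₁) where
  toFun τ := fc H s (t₀ + τ * (t₁ - t₀))
  continuous_toFun := by
    apply (continuous_fc hH).comp (f := fun τ : I => ((s, t₀ + τ * (t₁ - t₀)) : ℝ × ℝ))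
    fun_prop
  source' := by simp [fc]
  target' := by norm_num

/-- Vertical edge path of a grid. -/
noncomputable def vpath (H : I × I → X) (hH : Continuous H) (t s₀ s₁ : ℝ) :
    Path (fc H s₀ t) (fc H s₁ t) where
  toFun τ := fc H (s₀ + τ * (s₁ - s₀)) t
  continuous_toFun := by
    apply (continuous_fc hH).comp (f := fun τ : I => ((s₀ + τ * (s₁ - s₀), t) : ℝ × ℝ))
    fun_prop
  source' := by simp [fc]
  target' := by norm_num

@[simp] theorem hpath_apply (H : I × I → X) (hH : Continuous H) (s t₀ t₁ : ℝ) (τ : I) :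
    hpath H hH s t₀ t₁ τ = fc H s (t₀ + τ * (t₁ - t₀)) := rfl

@[simp] theorem vpath_apply (H : I × I → X) (hH : Continuous H) (t s₀ s₁ : ℝ) (τ : I) :
    vpath H hH t s₀ s₁ τ = fc H (s₀ + τ * (s₁ - s₀)) t := rfl

theorem range_hpath {A : Set X} (H : I × I → X) (hH : Continuous H) {s t₀ t₁ : ℝ}
    (ht : t₀ ≤ t₁) (hA : ∀ b ∈ Set.Icc t₀ t₁, fc H s b ∈ A) :
    Set.range (hpath H hH s t₀ t₁) ⊆ A := by
  rintro w ⟨τ, rfl⟩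
  rw [hpath_apply]
  refine hA _ ⟨?_, ?_⟩
  · nlinarith [τ.2.1, τ.2.2]
  · nlinarith [τ.2.1, τ.2.2]

theorem range_vpath {A : Set X} (H : I × I → X) (hH : Continuous H) {t s₀ s₁ : ℝ}
    (hs : s₀ ≤ s₁) (hA : ∀ a ∈ Set.Icc s₀ s₁, fc H a t ∈ A) :
    Set.range (vpath H hH t s₀ s₁) ⊆ A := by
  rintro w ⟨τ, rfl⟩
  rw [vpath_apply]
  refine hA _ ⟨?_, ?_⟩
  · nlinarith [τ.2.1, τ.2.2]
  · nlinarith [τ.2.1, τ.2.2]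

theorem sq_toFun {A Y : Set X} (w : NCocycle A Y G) (H : I × I → X) (hH : Continuous H)
    {s₀ s₁ t₀ t₁ : ℝ} (hs : s₀ ≤ s₁) (ht : t₀ ≤ t₁)
    (hW : ∀ a ∈ Set.Icc s₀ s₁, ∀ b ∈ Set.Icc t₀ t₁, fc H a b ∈ A)
    (h₁ : Set.range ((hpath H hH s₀ t₀ t₁).trans (vpath H hH t₁ s₀ s₁)) ⊆ A)
    (h₂ : Set.range ((vpath H hH t₀ s₀ s₁).trans (hpath H hH s₁ t₀ t₁)) ⊆ A) :
    w.toFun ((hpath H hH s₀ t₀ t₁).trans (vpath H hH t₁ s₀ s₁)) h₁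
      = w.toFun ((vpath H hH t₀ s₀ s₁).trans (hpath H hH s₁ t₀ t₁)) h₂ := by
  have hcoef : ∀ τ : I, 0 ≤ min (2 * (τ : ℝ)) 1 ∧ min (2 * (τ : ℝ)) 1 ≤ 1
      ∧ 0 ≤ max (2 * (τ : ℝ) - 1) 0 ∧ max (2 * (τ : ℝ) - 1) 0 ≤ 1 := by
    intro τ
    have h0 : (0 : ℝ) ≤ τ := τ.2.1
    have h1 : (τ : ℝ) ≤ 1 := τ.2.2
    refine ⟨le_min (by linarith) (by linarith), min_le_right _ _,
      le_max_right _ _, max_le (by linarith) (by linarith)⟩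
  refine seg w (E := ℝ × ℝ) (continuous_fc hH)
    ((convex_Icc s₀ s₁).prod (convex_Icc t₀ t₁))
    (fun e he => hW e.1 he.1 e.2 he.2)
    (g₀ := fun τ => (s₀ + max (2 * (τ : ℝ) - 1) 0 * (s₁ - s₀),
      t₀ + min (2 * (τ : ℝ)) 1 * (t₁ - t₀)))
    (g₁ := fun τ => (s₀ + min (2 * (τ : ℝ)) 1 * (s₁ - s₀),
      t₀ + max (2 * (τ : ℝ) - 1) 0 * (t₁ - t₀)))
    (by fun_prop) (by fun_prop)
    (fun τ => by
      obtain ⟨hm0, hm1, hx0, hx1⟩ := hcoef τ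
      simp only [Set.mem_prod, Set.mem_Icc]
      refine ⟨⟨by nlinarith, by nlinarith⟩, by nlinarith, by nlinarith⟩)
    (fun τ => by
      obtain ⟨hm0, hm1, hx0, hx1⟩ := hcoef τ
      simp only [Set.mem_prod, Set.mem_Icc]
      refine ⟨⟨by nlinarith, by nlinarith⟩, by nlinarith, by nlinarith⟩)
    (by norm_num) (by norm_num) (fun τ => ?_) (fun τ => ?_) h₁ h₂
  · rw [Path.trans_apply]
    split
    · next h =>
      have h2 : 2 * (τ : ℝ) ≤ 1 := by
        have : (τ : ℝ) ≤ 1 / 2 := h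
        linarith
      rw [hpath_apply, coeI_mk]
      show fc H s₀ (t₀ + 2 * (τ : ℝ) * (t₁ - t₀)) = fc H (s₀ + max (2 * (τ : ℝ) - 1) 0 * (s₁ - s₀)) (t₀ + min (2 * (τ : ℝ)) 1 * (t₁ - t₀))
      rw [min_eq_left h2, max_eq_right (by linarith)]
      exact congrArg₂ (fc H) (by ring) (by ring)
    · next h =>
      have h2 : (1 : ℝ) ≤ 2 * τ := by
        have := not_le.mp h
        have : (1 : ℝ) / 2 < τ := this
        linarith
      rw [vpath_apply, coeI_mk]
      show fc H (s₀ + (2 * (τ : ℝ) - 1) * (s₁ - s₀)) t₁ = fc H (s₀ + max (2 * (τ : ℝ) - 1) 0 * (s₁ - s₀)) (t₀ + min (2 * (τ : ℝ)) 1 * (t₁ - t₀))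
      rw [min_eq_right h2, max_eq_left (by linarith)]
      exact congrArg₂ (fc H) (by ring) (by ring)
  · rw [Path.trans_apply]
    split
    · next h =>
      have h2 : 2 * (τ : ℝ) ≤ 1 := by
        have : (τ : ℝ) ≤ 1 / 2 := h
        linarith
      rw [vpath_apply, coeI_mk]
      show fc H (s₀ + 2 * (τ : ℝ) * (s₁ - s₀)) t₀ = fc H (s₀ + min (2 * (τ : ℝ)) 1 * (s₁ - s₀)) (t₀ + max (2 * (τ : ℝ) - 1) 0 * (t₁ - t₀))
      rw [min_eq_left h2, max_eq_right (by linarith)]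
      exact congrArg₂ (fc H) (by ring) (by ring)
    · next h =>
      have h2 : (1 : ℝ) ≤ 2 * τ := by
        have := not_le.mp h
        have : (1 : ℝ) / 2 < τ := this
        linarith
      rw [hpath_apply, coeI_mk]
      show fc H s₁ (t₀ + (2 * (τ : ℝ) - 1) * (t₁ - t₀)) = fc H (s₀ + min (2 * (τ : ℝ)) 1 * (s₁ - s₀)) (t₀ + max (2 * (τ : ℝ) - 1) 0 * (t₁ - t₀))
      rw [min_eq_right h2, max_eq_left (by linarith)]
      exact congrArg₂ (fc H) (by ring) (by ring)

section Glue3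

variable {U V YY : Set X} {u : NCocycle U YY G} {v : NCocycle V YY G}

theorem sq_pval (hagree : Agrees u v) (H : I × I → X) (hH : Continuous H)
    {s₀ s₁ t₀ t₁ : ℝ} (hs : s₀ ≤ s₁) (ht : t₀ ≤ t₁)
    (hW : (∀ a ∈ Set.Icc s₀ s₁, ∀ b ∈ Set.Icc t₀ t₁, fc H a b ∈ U)
      ∨ (∀ a ∈ Set.Icc s₀ s₁, ∀ b ∈ Set.Icc t₀ t₁, fc H a b ∈ V)) :
    pval u v (hpath H hH s₀ t₀ t₁) * pval u v (vpath H hH t₁ s₀ s₁)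
      = pval u v (vpath H hH t₀ s₀ s₁) * pval u v (hpath H hH s₁ t₀ t₁) := by
  rcases hW with hW | hW
  · have hb : Set.range (hpath H hH s₀ t₀ t₁) ⊆ U :=
      range_hpath H hH ht (fun b hb => hW s₀ ⟨le_rfl, hs⟩ b hb)
    have hr : Set.range (vpath H hH t₁ s₀ s₁) ⊆ U :=
      range_vpath H hH hs (fun a ha => hW a ha t₁ ⟨ht, le_rfl⟩)
    have hl : Set.range (vpath H hH t₀ s₀ s₁) ⊆ U :=
      range_vpath H hH hs (fun a ha => hW a ha t₀ ⟨le_rfl, ht⟩)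
    have htp : Set.range (hpath H hH s₁ t₀ t₁) ⊆ U :=
      range_hpath H hH ht (fun b hb => hW s₁ ⟨hs, le_rfl⟩ b hb)
    have h₁ : Set.range ((hpath H hH s₀ t₀ t₁).trans (vpath H hH t₁ s₀ s₁)) ⊆ U := by
      rw [Path.trans_range]; exact Set.union_subset hb hr
    have h₂ : Set.range ((vpath H hH t₀ s₀ s₁).trans (hpath H hH s₁ t₀ t₁)) ⊆ U := by
      rw [Path.trans_range]; exact Set.union_subset hl htp
    rw [pval_u _ hb, pval_u _ hr, pval_u _ hl, pval_u _ htp,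
      ← u.mul _ _ h₁ hb hr, ← u.mul _ _ h₂ hl htp]
    exact sq_toFun u H hH hs ht hW h₁ h₂
  · have hb : Set.range (hpath H hH s₀ t₀ t₁) ⊆ V :=
      range_hpath H hH ht (fun b hb => hW s₀ ⟨le_rfl, hs⟩ b hb)
    have hr : Set.range (vpath H hH t₁ s₀ s₁) ⊆ V :=
      range_vpath H hH hs (fun a ha => hW a ha t₁ ⟨ht, le_rfl⟩)
    have hl : Set.range (vpath H hH t₀ s₀ s₁) ⊆ V :=
      range_vpath H hH hs (fun a ha => hW a ha t₀ ⟨le_rfl, ht⟩)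
    have htp : Set.range (hpath H hH s₁ t₀ t₁) ⊆ V :=
      range_hpath H hH ht (fun b hb => hW s₁ ⟨hs, le_rfl⟩ b hb)
    have h₁ : Set.range ((hpath H hH s₀ t₀ t₁).trans (vpath H hH t₁ s₀ s₁)) ⊆ V := by
      rw [Path.trans_range]; exact Set.union_subset hb hr
    have h₂ : Set.range ((vpath H hH t₀ s₀ s₁).trans (hpath H hH s₁ t₀ t₁)) ⊆ V := by
      rw [Path.trans_range]; exact Set.union_subset hl htp
    rw [pval_v hagree _ hb, pval_v hagree _ hr, pval_v hagree _ hl, pval_v hagree _ htp,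
      ← v.mul _ _ h₁ hb hr, ← v.mul _ _ h₂ hl htp]
    exact sq_toFun v H hH hs ht hW h₁ h₂

theorem exists_squares (H : I × I → X) (hH : Continuous H)
    (hUo : IsOpen U) (hVo : IsOpen V) (hcover : ∀ z : X, z ∈ U ∨ z ∈ V) :
    ∃ N : ℕ, 0 < N ∧ ∀ i j : ℕ, i < N → j < N →
      (∀ a ∈ Set.Icc ((j : ℝ) / N) (((j : ℝ) + 1) / N),
        ∀ b ∈ Set.Icc ((i : ℝ) / N) (((i : ℝ) + 1) / N), fc H a b ∈ U) ∨
      (∀ a ∈ Set.Icc ((j : ℝ) / N) (((j : ℝ) + 1) / N),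
        ∀ b ∈ Set.Icc ((i : ℝ) / N) (((i : ℝ) + 1) / N), fc H a b ∈ V) := by
  classical
  set c : Bool → Set (I × I) := fun b => if b then H ⁻¹' U else H ⁻¹' V with hc
  have hc₁ : ∀ b, IsOpen (c b) := by
    intro b
    cases b <;> simp only [hc, if_true, if_false, Bool.false_eq_true] <;>
      [exact hVo.preimage hH; exact hUo.preimage hH]
  have hc₂ : (Set.univ : Set (I × I)) ⊆ ⋃ b, c b := by
    intro z _
    rcases hcover (H z) with hz | hz
    · exact Set.mem_iUnion.mpr ⟨true, by simpa [hc] using hz⟩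
    · exact Set.mem_iUnion.mpr ⟨false, by simpa [hc] using hz⟩
  obtain ⟨δ, hδ, hball⟩ := lebesgue_number_lemma_of_metric isCompact_univ hc₁ hc₂
  obtain ⟨n, hn⟩ := exists_nat_one_div_lt hδ
  refine ⟨n + 1, Nat.succ_pos n, fun i j hi hj => ?_⟩
  set N : ℝ := ((n + 1 : ℕ) : ℝ) with hN
  have hN0 : (0 : ℝ) < N := by rw [hN]; positivity
  have hjN : (j : ℝ) / N ∈ unitInterval := by
    constructor
    · positivity
    · rw [div_le_one hN0, hN]; exact_mod_cast hj.le
  have hiN : (i : ℝ) / N ∈ unitInterval := by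
    constructor
    · positivity
    · rw [div_le_one hN0, hN]; exact_mod_cast hi.le
  obtain ⟨b, hb⟩ := hball (⟨(j : ℝ) / N, hjN⟩, ⟨(i : ℝ) / N, hiN⟩) trivial
  have hj1 : ((j : ℝ) + 1) ≤ N := by rw [hN]; push_cast; exact_mod_cast hj
  have hi1 : ((i : ℝ) + 1) ≤ N := by rw [hN]; push_cast; exact_mod_cast hi
  have key : ∀ a ∈ Set.Icc ((j : ℝ) / N) (((j : ℝ) + 1) / N),
      ∀ e ∈ Set.Icc ((i : ℝ) / N) (((i : ℝ) + 1) / N),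
      ∃ (haI : a ∈ Set.Icc (0 : ℝ) 1) (heI : e ∈ Set.Icc (0 : ℝ) 1),
        ((⟨a, haI⟩, ⟨e, heI⟩) : I × I) ∈ c b := by
    intro a ha e he
    have haI : a ∈ Set.Icc (0 : ℝ) 1 := by
      constructor
      · exact le_trans (by positivity) ha.1
      · exact le_trans ha.2 (by rw [div_le_one hN0]; linarith)
    have heI : e ∈ Set.Icc (0 : ℝ) 1 := by
      constructor
      · exact le_trans (by positivity) he.1
      · exact le_trans he.2 (by rw [div_le_one hN0]; linarith)
    refine ⟨haI, heI, hb ?_⟩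
    rw [Metric.mem_ball, Prod.dist_eq]
    have h1N : 1 / N < δ := by rw [hN]; push_cast; exact hn
    have hdj : ((j : ℝ) + 1) / N - (j : ℝ) / N = 1 / N := by field_simp; ring
    have hdi : ((i : ℝ) + 1) / N - (i : ℝ) / N = 1 / N := by field_simp; ring
    refine max_lt ?_ ?_
    · rw [Subtype.dist_eq, coeI_mk, coeI_mk, Real.dist_eq,
        abs_of_nonneg (by linarith [ha.1])]
      linarith [ha.2]
    · rw [Subtype.dist_eq, coeI_mk, coeI_mk, Real.dist_eq,
        abs_of_nonneg (by linarith [he.1])]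
      linarith [he.2]
  have hproj : ∀ (r : ℝ) (hr : r ∈ Set.Icc (0 : ℝ) 1),
      Set.projIcc 0 1 zero_le_one r = ⟨r, hr⟩ := fun r hr => Set.projIcc_of_mem _ hr
  cases b
  · refine Or.inr fun a ha e he => ?_
    obtain ⟨haI, heI, hmem⟩ := key a ha e he
    simp only [hc, Bool.false_eq_true, if_false] at hmem
    rw [fc, hproj a haI, hproj e heI]
    exact hmem
  · refine Or.inl fun a ha e he => ?_
    obtain ⟨haI, heI, hmem⟩ := key a ha e he
    simp only [hc, if_true] at hmem
    rw [fc, hproj a haI, hproj e heI]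
    exact hmem

end Glue3

end NCocycle
namespace NCocycle

variable {X : Type} [TopologicalSpace X] {G : Type} [Group G]

open Set unitInterval

section Glue4

variable {U V YY : Set X} {u : NCocycle U YY G} {v : NCocycle V YY G}

open scoped Classical in
theorem glue_homotopy (hUo : IsOpen U) (hVo : IsOpen V)
    (hcover : ∀ z : X, z ∈ U ∨ z ∈ V) (hagree : Agrees u v) {x y : X}
    (p q : Path x y) (F : p.Homotopy q) :
    glue u v hUo hVo hcover p = glue u v hUo hVo hcover q := by
  set H : I × I → X := ⇑F with hHdef
  have hH : Continuous H := F.continuous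
  obtain ⟨N, hNpos, hsq⟩ := exists_squares H hH hUo hVo hcover
  have hN0 : (0 : ℝ) < N := by exact_mod_cast hNpos
  have hNne : (N : ℝ) ≠ 0 := hN0.ne'
  have hp0 : Set.projIcc (0 : ℝ) 1 zero_le_one 0 = (0 : I) :=
    projIcc_eq_zero.mpr le_rfl
  have hp1 : Set.projIcc (0 : ℝ) 1 zero_le_one 1 = (1 : I) :=
    projIcc_eq_one.mpr le_rfl
  have hF0 : ∀ b : I, H (0, b) = p b := fun b => F.apply_zero b
  have hF1 : ∀ b : I, H (1, b) = q b := fun b => F.apply_one b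
  have hFs : ∀ a : I, H (a, 0) = x := fun a => F.source a
  have hFt : ∀ a : I, H (a, 1) = y := fun a => F.target a
  set R : ℕ → ℕ → G := fun j i =>
    pval u v (hpath H hH ((j : ℝ) / N) ((i : ℝ) / N) (((i : ℝ) + 1) / N)) with hR
  set Vt : ℕ → ℕ → G := fun j k =>
    pval u v (vpath H hH ((k : ℝ) / N) ((j : ℝ) / N) (((j : ℝ) + 1) / N)) with hVt
  have hVt0 : ∀ j : ℕ, Vt j 0 = 1 := by
    intro j
    rw [hVt]
    refine pval_const hcover _ x fun τ => ?_
    rw [vpath_apply, show ((0 : ℕ) : ℝ) / N = (0 : ℝ) from by norm_num, fc, hp0]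
    exact hFs _
  have hVtN : ∀ j : ℕ, Vt j N = 1 := by
    intro j
    rw [hVt]
    refine pval_const hcover _ y fun τ => ?_
    rw [vpath_apply, show ((N : ℕ) : ℝ) / N = (1 : ℝ) from div_self hNne, fc, hp1]
    exact hFt _
  have row_step : ∀ j : ℕ, j < N → listProd (R j) N = listProd (R (j + 1)) N := by
    intro j hj
    have claim : ∀ k : ℕ, k ≤ N →
        listProd (R j) k * Vt j k = Vt j 0 * listProd (R (j + 1)) k := by
      intro k
      induction k with
      | zero => intro _; rw [listProd_zero, one_mul, listProd_zero, mul_one]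
      | succ k ih =>
        intro hk
        have hk' : k < N := by omega
        have hcast1 : Vt j (k + 1) = pval u v
            (vpath H hH (((k : ℝ) + 1) / N) ((j : ℝ) / N) (((j : ℝ) + 1) / N)) := by
          rw [hVt]
          refine pval_congr _ _ fun τ => ?_
          rw [vpath_apply, vpath_apply]
          exact congrArg₂ (fc H) rfl (by push_cast; ring)
        have hcast2 : R (j + 1) k = pval u v
            (hpath H hH (((j : ℝ) + 1) / N) ((k : ℝ) / N) (((k : ℝ) + 1) / N)) := by
          rw [hR]
          refine pval_congr _ _ fun τ => ?_
          rw [hpath_apply, hpath_apply]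
          exact congrArg₂ (fc H) (by push_cast; ring) rfl
        have hstep := sq_pval (u := u) (v := v) hagree H hH
          ((div_le_div_iff_of_pos_right hN0).mpr (by linarith : (j : ℝ) ≤ (j : ℝ) + 1))
          ((div_le_div_iff_of_pos_right hN0).mpr (by linarith : (k : ℝ) ≤ (k : ℝ) + 1))
          (hsq k j hk' hj)
        have hmid : R j k * Vt j (k + 1) = Vt j k * R (j + 1) k := by
          rw [hcast1, hcast2, hR, hVt]
          exact hstep
        calc listProd (R j) (k + 1) * Vt j (k + 1)
            = listProd (R j) k * (R j k * Vt j (k + 1)) := by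
              rw [listProd_succ, mul_assoc]
          _ = listProd (R j) k * (Vt j k * R (j + 1) k) := by rw [hmid]
          _ = listProd (R j) k * Vt j k * R (j + 1) k := by rw [mul_assoc]
          _ = Vt j 0 * listProd (R (j + 1)) k * R (j + 1) k := by rw [ih (by omega)]
          _ = Vt j 0 * listProd (R (j + 1)) (k + 1) := by
              rw [listProd_succ, mul_assoc]
    have hfin := claim N le_rfl
    rw [hVtN, hVt0, mul_one, one_mul] at hfin
    exact hfin
  have rows_eq : ∀ j : ℕ, j ≤ N → listProd (R 0) N = listProd (R j) N := by
    intro j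
    induction j with
    | zero => intro _; rfl
    | succ j ih =>
      intro hj
      rw [ih (by omega), row_step j (by omega)]
  -- identification of the bottom row with `p`
  have hpid : ∀ (i : ℕ) (τ : I), affineCut p ((i : ℝ) / N) (((i : ℝ) + 1) / N) τ
      = hpath H hH (((0 : ℕ) : ℝ) / N) ((i : ℝ) / N) (((i : ℝ) + 1) / N) τ := by
    intro i τ
    rw [affineCut_apply, hpath_apply, show ((0 : ℕ) : ℝ) / N = (0 : ℝ) from by norm_num,
      fc, hp0, path_extend_eq_fc]
    exact (hF0 _).symm
  have hqid : ∀ (i : ℕ) (τ : I), affineCut q ((i : ℝ) / N) (((i : ℝ) + 1) / N) τ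
      = hpath H hH (((N : ℕ) : ℝ) / N) ((i : ℝ) / N) (((i : ℝ) + 1) / N) τ := by
    intro i τ
    rw [affineCut_apply, hpath_apply, show ((N : ℕ) : ℝ) / N = (1 : ℝ) from div_self hNne,
      fc, hp1, path_extend_eq_fc]
    exact (hF1 _).symm
  have hargmem : ∀ i : ℕ, ∀ τ : I, (i : ℝ) / N + τ * (((i : ℝ) + 1) / N - (i : ℝ) / N)
      ∈ Set.Icc ((i : ℝ) / N) (((i : ℝ) + 1) / N) := by
    intro i τ
    have hd : ((i : ℝ) + 1) / N - (i : ℝ) / N = 1 / N := by field_simp; ring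
    have h1N : (0 : ℝ) < 1 / N := by positivity
    have ht0 : (0 : ℝ) ≤ τ := τ.2.1
    have ht1 : (τ : ℝ) ≤ 1 := τ.2.2
    constructor
    · rw [hd]; nlinarith
    · rw [hd]
      have : (i : ℝ) / N + 1 / N = ((i : ℝ) + 1) / N := by field_simp
      nlinarith
  have h0mem : (0 : ℝ) ∈ Set.Icc (((0 : ℕ) : ℝ) / N) ((((0 : ℕ) : ℝ) + 1) / N) := by
    constructor
    · norm_num
    · positivity
  have hgoodp : good U V p N := by
    refine ⟨hNpos, fun i hi => ?_⟩
    rcases hsq i 0 hi hNpos with hW | hW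
    · left
      rintro w ⟨τ, rfl⟩
      rw [hpid i τ, hpath_apply, show ((0 : ℕ) : ℝ) / N = (0 : ℝ) from by norm_num]
      exact hW 0 h0mem _ (hargmem i τ)
    · right
      rintro w ⟨τ, rfl⟩
      rw [hpid i τ, hpath_apply, show ((0 : ℕ) : ℝ) / N = (0 : ℝ) from by norm_num]
      exact hW 0 h0mem _ (hargmem i τ)
  have hNsub : ((N - 1 : ℕ) : ℝ) = (N : ℝ) - 1 := by
    rw [Nat.cast_sub hNpos, Nat.cast_one]
  have h1mem : (1 : ℝ) ∈ Set.Icc (((N - 1 : ℕ) : ℝ) / N) ((((N - 1 : ℕ) : ℝ) + 1) / N) := by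
    rw [hNsub]
    constructor
    · rw [div_le_one hN0]; linarith
    · rw [show (N : ℝ) - 1 + 1 = (N : ℝ) from by ring, div_self hNne]
  have hgoodq : good U V q N := by
    refine ⟨hNpos, fun i hi => ?_⟩
    rcases hsq i (N - 1) hi (by omega) with hW | hW
    · left
      rintro w ⟨τ, rfl⟩
      rw [hqid i τ, hpath_apply, show ((N : ℕ) : ℝ) / N = (1 : ℝ) from div_self hNne]
      exact hW 1 h1mem _ (hargmem i τ)
    · right
      rintro w ⟨τ, rfl⟩
      rw [hqid i τ, hpath_apply, show ((N : ℕ) : ℝ) / N = (1 : ℝ) from div_self hNne]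
      exact hW 1 h1mem _ (hargmem i τ)
  have hSp : Sval u v p N = listProd (R 0) N := by
    refine listProd_congr fun i hi => ?_
    rw [hR]
    exact pval_congr _ _ (hpid i)
  have hSq : Sval u v q N = listProd (R N) N := by
    refine listProd_congr fun i hi => ?_
    rw [hR]
    exact pval_congr _ _ (hqid i)
  rw [glue_eq_Sval hUo hVo hcover hagree p hgoodp,
    glue_eq_Sval hUo hVo hcover hagree q hgoodq, hSp, hSq]
  exact rows_eq N le_rfl

end Glue4

end NCocycle
namespace NCocycle

variable {X : Type} [TopologicalSpace X] {G : Type} [Group G]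

open Set unitInterval

section Glue5

variable {U V YY : Set X}

open scoped Classical in
/-- The glued cocycle on all of `X`. -/
noncomputable def glueCocycle (u : NCocycle U YY G) (v : NCocycle V YY G)
    (hUo : IsOpen U) (hVo : IsOpen V) (hcover : ∀ z : X, z ∈ U ∨ z ∈ V)
    (hagree : Agrees u v) (hYU : YY ⊆ U) : NCocycle (Set.univ : Set X) YY G where
  toFun p _ := glue u v hUo hVo hcover p
  triv p _ hY := glue_triv hUo hVo hcover hagree hYU p hY
  homotopy_inv p q F _ _ _ := glue_homotopy hUo hVo hcover hagree p q F
  mul p q _ _ _ := glue_trans hUo hVo hcover hagree p q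

open scoped Classical in
theorem cohom_univ_of_uv (hUo : IsOpen U) (hVo : IsOpen V)
    (hcover : ∀ z : X, z ∈ U ∨ z ∈ V) (hYUV : ∀ z ∈ YY, z ∈ U ∧ z ∈ V)
    (hjoin : ∀ z ∈ U ∩ V, ∃ w ∈ YY, JoinedIn (U ∩ V) w z)
    {u u' : NCocycle (Set.univ : Set X) YY G}
    (hU : Cohom (res (Set.subset_univ U) subset_rfl u) (res (Set.subset_univ U) subset_rfl u'))
    (hV : Cohom (res (Set.subset_univ V) subset_rfl u) (res (Set.subset_univ V) subset_rfl u')) :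
    Cohom u u' := by
  obtain ⟨cU, hcU1, hcUrel⟩ := hU
  obtain ⟨cV, hcV1, hcVrel⟩ := hV
  have hUV : ∀ z ∈ U ∩ V, cU z = cV z := by
    intro z hz
    obtain ⟨w, hwY, hj⟩ := hjoin z hz
    obtain ⟨γ, hγ⟩ := hj
    have hγU : Set.range γ ⊆ U := Set.range_subset_iff.mpr fun t => (hγ t).1
    have hγV : Set.range γ ⊆ V := Set.range_subset_iff.mpr fun t => (hγ t).2
    have h1 := hcUrel γ hγU
    have h2 := hcVrel γ hγV
    rw [hcU1 w hwY] at h1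
    rw [hcV1 w hwY] at h2
    have he1 : (res (Set.subset_univ U) subset_rfl u').toFun γ hγU
        = (res (Set.subset_univ V) subset_rfl u').toFun γ hγV := rfl
    have he2 : (res (Set.subset_univ U) subset_rfl u).toFun γ hγU
        = (res (Set.subset_univ V) subset_rfl u).toFun γ hγV := rfl
    rw [he1, h2, ← he2] at h1
    -- h1 : 1 * A * (cV z)⁻¹ = 1 * A * (cU z)⁻¹
    have := mul_left_cancel h1
    exact (inv_inj.mp this).symm
  set c : X → G := fun z => if z ∈ U then cU z else cV z with hc
  have hcU' : ∀ z ∈ U, c z = cU z := fun z hz => if_pos hz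
  have hcV' : ∀ z ∈ V, c z = cV z := by
    intro z hz
    by_cases hzU : z ∈ U
    · rw [hc]
      simp only [if_pos hzU]
      exact hUV z ⟨hzU, hz⟩
    · rw [hc]
      simp only [if_neg hzU]
  refine ⟨c, fun w hw => by rw [hcU' w (hYUV w hw).1]; exact hcU1 w hw, ?_⟩
  intro x y p hp
  obtain ⟨n, hgood⟩ := exists_good hUo hVo hcover p
  set N : ℕ := n + 1 with hN
  have hNpos : 0 < N := Nat.succ_pos n
  have hNne : (N : ℝ) ≠ 0 := Nat.cast_ne_zero.mpr hNpos.ne'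
  have hup := subdiv u p hp N hNpos
  have hu'p := subdiv u' p hp N hNpos
  set d : ℕ → G := fun i => c (p.extend ((i : ℝ) / N)) with hd
  have hterm : ∀ i < N,
      u'.toFun (affineCut p ((i : ℝ) / N) (((i : ℝ) + 1) / N))
          ((range_affineCut p _ _).trans hp)
        = d i * u.toFun (affineCut p ((i : ℝ) / N) (((i : ℝ) + 1) / N))
            ((range_affineCut p _ _).trans hp) * (d (i + 1))⁻¹ := by
    intro i hi
    have hd1 : d (i + 1) = c (p.extend (((i : ℝ) + 1) / N)) := by
      have hcast : ((i + 1 : ℕ) : ℝ) = (i : ℝ) + 1 := by push_cast; ring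
      simp only [hd, hcast]
    have hsrc : p.extend ((i : ℝ) / N)
        ∈ Set.range (affineCut p ((i : ℝ) / N) (((i : ℝ) + 1) / N)) := by
      refine ⟨0, ?_⟩
      rw [affineCut_apply]
      norm_num
    have htgt : p.extend (((i : ℝ) + 1) / N)
        ∈ Set.range (affineCut p ((i : ℝ) / N) (((i : ℝ) + 1) / N)) := by
      refine ⟨1, ?_⟩
      rw [affineCut_apply]
      norm_num
    rcases hgood.2 i hi with hW | hW
    · have h := hcUrel (affineCut p ((i : ℝ) / N) (((i : ℝ) + 1) / N)) hW
      rw [show (res (Set.subset_univ U) subset_rfl u').toFun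
          (affineCut p ((i : ℝ) / N) (((i : ℝ) + 1) / N)) hW
          = u'.toFun (affineCut p ((i : ℝ) / N) (((i : ℝ) + 1) / N))
            ((range_affineCut p _ _).trans hp) from rfl,
        show (res (Set.subset_univ U) subset_rfl u).toFun
          (affineCut p ((i : ℝ) / N) (((i : ℝ) + 1) / N)) hW
          = u.toFun (affineCut p ((i : ℝ) / N) (((i : ℝ) + 1) / N))
            ((range_affineCut p _ _).trans hp) from rfl] at h
      rw [h, hd1, show d i = c (p.extend ((i : ℝ) / N)) from rfl,
        hcU' _ (hW hsrc), hcU' _ (hW htgt)]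
    · have h := hcVrel (affineCut p ((i : ℝ) / N) (((i : ℝ) + 1) / N)) hW
      rw [show (res (Set.subset_univ V) subset_rfl u').toFun
          (affineCut p ((i : ℝ) / N) (((i : ℝ) + 1) / N)) hW
          = u'.toFun (affineCut p ((i : ℝ) / N) (((i : ℝ) + 1) / N))
            ((range_affineCut p _ _).trans hp) from rfl,
        show (res (Set.subset_univ V) subset_rfl u).toFun
          (affineCut p ((i : ℝ) / N) (((i : ℝ) + 1) / N)) hW
          = u.toFun (affineCut p ((i : ℝ) / N) (((i : ℝ) + 1) / N))
            ((range_affineCut p _ _).trans hp) from rfl] at h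
      rw [h, hd1, show d i = c (p.extend ((i : ℝ) / N)) from rfl,
        hcV' _ (hW hsrc), hcV' _ (hW htgt)]
  have htel := listProd_telescope (d := d) (e := fun i =>
    u.toFun (affineCut p ((i : ℝ) / N) (((i : ℝ) + 1) / N))
      ((range_affineCut p _ _).trans hp)) (n := N) hterm
  rw [hu'p, htel, ← hup]
  have hd0 : d 0 = c x := by
    simp only [hd]
    norm_num
  have hdN : d N = c y := by
    simp only [hd, div_self hNne, Path.extend_one]
  rw [hd0, hdN]

end Glue5

end NCocycle
namespace NCocycle

variable {X : Type} [TopologicalSpace X] {G : Type} [Group G]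

open Set unitInterval

section Product

variable {W : Set X} {m : ℕ} {A : Fin (m + 1) → Set X} {a : Fin (m + 1) → X}

open scoped Classical in
/-- Index of the path component containing a point. -/
noncomputable def pidx (A : Fin (m + 1) → Set X) (z : X) : Fin (m + 1) :=
  if hz : ∃ i, z ∈ A i then hz.choose else ⟨0, Nat.succ_pos m⟩

theorem comp_disjoint (hAcomp : ∀ i, A i = pathComponentIn W (a i))
    (hAne : ∀ i j, i ≠ j → A i ≠ A j) {z : X} {i j : Fin (m + 1)}
    (hi : z ∈ A i) (hj : z ∈ A j) : i = j := by
  by_contra hne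
  refine hAne i j hne ?_
  rw [hAcomp i] at hi ⊢
  rw [hAcomp j] at hj ⊢
  rw [← pathComponentIn_congr hi, ← pathComponentIn_congr hj]

open scoped Classical in
theorem pidx_spec (hAcomp : ∀ i, A i = pathComponentIn W (a i))
    (hAne : ∀ i j, i ≠ j → A i ≠ A j) {z : X} {i : Fin (m + 1)} (hi : z ∈ A i) :
    pidx A z = i := by
  rw [pidx, dif_pos (⟨i, hi⟩ : ∃ j, z ∈ A j)]
  exact comp_disjoint hAcomp hAne (Exists.choose_spec (⟨i, hi⟩ : ∃ j, z ∈ A j)) hi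

open scoped Classical in
theorem mem_A_pidx (hAunion : (⋃ i, A i) = W) {z : X} (hz : z ∈ W) :
    z ∈ A (pidx A z) := by
  have hex : ∃ i, z ∈ A i := Set.mem_iUnion.mp (hAunion ▸ hz)
  rw [pidx, dif_pos hex]
  exact hex.choose_spec

theorem range_in_component (hAcomp : ∀ i, A i = pathComponentIn W (a i))
    {x y : X} (p : Path x y) (hp : Set.range p ⊆ W) {i : Fin (m + 1)}
    (hx : x ∈ A i) : Set.range p ⊆ A i := by
  rintro w ⟨t, rfl⟩
  rw [hAcomp] at hx ⊢
  have hxp : JoinedIn W x (p t) := by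
    refine ⟨(affineCut p 0 (t : ℝ)).cast p.extend_zero.symm (p.extend_extends' t).symm,
      fun τ => ?_⟩
    have he : ((affineCut p 0 (t : ℝ)).cast p.extend_zero.symm
        (p.extend_extends' t).symm) τ = p.extend (0 + τ * ((t : ℝ) - 0)) := rfl
    rw [he]
    refine hp ?_
    rw [← p.extend_range]
    exact Set.mem_range_self _
  exact JoinedIn.trans hx hxp

/-- The straight path from the origin of the unit square to a point. -/
noncomputable def segSquare (w : I × I) : Path ((0, 0) : I × I) w where
  toFun τ := (⟨τ * w.1, unitInterval.mul_mem τ.2 w.1.2⟩,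
    ⟨τ * w.2, unitInterval.mul_mem τ.2 w.2.2⟩)
  continuous_toFun := by fun_prop
  source' := by
    refine Prod.ext (Subtype.ext ?_) (Subtype.ext ?_) <;> simp
  target' := by
    refine Prod.ext (Subtype.ext ?_) (Subtype.ext ?_) <;> simp

theorem homotopy_range_in_component (hAcomp : ∀ i, A i = pathComponentIn W (a i))
    {x y : X} {p q : Path x y} (F : p.Homotopy q) (hF : Set.range F ⊆ W)
    {i : Fin (m + 1)} (hx : x ∈ A i) : Set.range F ⊆ A i := by
  rintro w ⟨e, rfl⟩
  rw [hAcomp] at hx ⊢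
  have h00 : F ((0 : I), (0 : I)) = x := by
    rw [show F ((0 : I), (0 : I)) = p 0 from F.apply_zero 0, p.source]
  have hxe : JoinedIn W x (F e) := by
    refine ⟨((segSquare e).map F.continuous).cast h00.symm rfl, fun τ => ?_⟩
    have he : (((segSquare e).map F.continuous).cast h00.symm rfl) τ
        = F (segSquare e τ) := rfl
    rw [he]
    exact hF (Set.mem_range_self _)
  exact JoinedIn.trans hx hxe

variable (A a) in
/-- The underlying function of the glued cocycle on `W` from cocycles on the `A i`. -/
noncomputable def pgFun (hAcomp : ∀ i, A i = pathComponentIn W (a i))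
    (hAunion : (⋃ i, A i) = W) (us : ∀ i, NCocycle (A i) {a i} G)
    {x y : X} (p : Path x y) (hp : Set.range p ⊆ W) : G :=
  (us (pidx A x)).toFun p (range_in_component hAcomp p hp
    (mem_A_pidx hAunion (hp ⟨0, p.source⟩)))

theorem pgFun_eq (hAcomp : ∀ i, A i = pathComponentIn W (a i))
    (hAne : ∀ i j, i ≠ j → A i ≠ A j) (hAunion : (⋃ i, A i) = W)
    (us : ∀ i, NCocycle (A i) {a i} G) {x y : X} (p : Path x y)
    (hp : Set.range p ⊆ W) {i : Fin (m + 1)} (hi : Set.range p ⊆ A i) :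
    pgFun A a hAcomp hAunion us p hp = (us i).toFun p hi := by
  have h : pidx A x = i := pidx_spec hAcomp hAne (hi ⟨0, p.source⟩)
  subst h
  rfl

variable (A a) in
/-- The glued cocycle on `W` from a family of cocycles on the components `A i`. -/
noncomputable def prodGlue (hAcomp : ∀ i, A i = pathComponentIn W (a i))
    (hAne : ∀ i j, i ≠ j → A i ≠ A j) (hAunion : (⋃ i, A i) = W)
    (haA : ∀ i, a i ∈ A i) (us : ∀ i, NCocycle (A i) {a i} G) :
    NCocycle W (Set.range a) G where
  toFun p hp := pgFun A a hAcomp hAunion us p hp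
  triv {x y} p hp hY := by
    show pgFun A a hAcomp hAunion us p hp = 1
    obtain ⟨j, hj⟩ : ∃ j, a j = x := hY ⟨0, p.source⟩
    have hxAj : x ∈ A j := hj ▸ haA j
    have hrange : Set.range p ⊆ A j := range_in_component hAcomp p hp hxAj
    rw [pgFun_eq hAcomp hAne hAunion us p hp hrange]
    refine (us j).triv p hrange ?_
    rintro w ⟨t, rfl⟩
    obtain ⟨k, hk⟩ := hY (Set.mem_range_self t)
    have h1 : p t ∈ A j := hrange (Set.mem_range_self t)
    rw [← hk] at h1 ⊢
    have hjk : j = k := comp_disjoint hAcomp hAne h1 (haA k)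
    rw [hjk]
    rfl
  homotopy_inv {x y} p q F hF hp hq := by
    show pgFun A a hAcomp hAunion us p hp = pgFun A a hAcomp hAunion us q hq
    have hx : x ∈ A (pidx A x) := mem_A_pidx hAunion (hp ⟨0, p.source⟩)
    have hrp : Set.range p ⊆ A (pidx A x) := range_in_component hAcomp p hp hx
    have hrq : Set.range q ⊆ A (pidx A x) := range_in_component hAcomp q hq hx
    have hrF : Set.range F ⊆ A (pidx A x) :=
      homotopy_range_in_component hAcomp F hF hx
    rw [pgFun_eq hAcomp hAne hAunion us p hp hrp,
      pgFun_eq hAcomp hAne hAunion us q hq hrq]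
    exact (us _).homotopy_inv p q F hrF hrp hrq
  mul {x y z} p q hpq hp hq := by
    show pgFun A a hAcomp hAunion us (p.trans q) hpq
      = pgFun A a hAcomp hAunion us p hp * pgFun A a hAcomp hAunion us q hq
    have hx : x ∈ A (pidx A x) := mem_A_pidx hAunion (hpq ⟨0, (p.trans q).source⟩)
    have hrpq : Set.range (p.trans q) ⊆ A (pidx A x) :=
      range_in_component hAcomp (p.trans q) hpq hx
    have hrp : Set.range p ⊆ A (pidx A x) := by
      refine le_trans ?_ hrpq
      rw [Path.trans_range]
      exact Set.subset_union_left
    have hrq : Set.range q ⊆ A (pidx A x) := by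
      refine le_trans ?_ hrpq
      rw [Path.trans_range]
      exact Set.subset_union_right
    rw [pgFun_eq hAcomp hAne hAunion us (p.trans q) hpq hrpq,
      pgFun_eq hAcomp hAne hAunion us p hp hrp,
      pgFun_eq hAcomp hAne hAunion us q hq hrq]
    exact (us _).mul p q hrpq hrp hrq

end Product

end NCocycle
namespace NCocycle

variable {X : Type} [TopologicalSpace X] {G : Type} [Group G]

open Set unitInterval

/-- Modify a cocycle by a 0-cochain. -/
def twist {V YY : Set X} (v : NCocycle V YY G) (c : X → G)
    (hc : ∀ y ∈ YY, c y = 1) : NCocycle V YY G where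
  toFun {x y} p hp := (c x)⁻¹ * v.toFun p hp * c y
  triv {x y} p hp hY := by
    show (c x)⁻¹ * v.toFun p hp * c y = 1
    rw [v.triv p hp hY, hc x (hY ⟨0, p.source⟩), hc y (hY ⟨1, p.target⟩)]
    group
  homotopy_inv {x y} p q F hF hp hq := by
    show (c x)⁻¹ * v.toFun p hp * c y = (c x)⁻¹ * v.toFun q hq * c y
    rw [v.homotopy_inv p q F hF hp hq]
  mul {x y z} p q hpq hp hq := by
    show (c x)⁻¹ * v.toFun (p.trans q) hpq * c z
      = ((c x)⁻¹ * v.toFun p hp * c y) * ((c y)⁻¹ * v.toFun q hq * c z)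
    rw [v.mul p q hpq hp hq]
    group

theorem cohom_twist {V YY : Set X} (v : NCocycle V YY G) (c : X → G)
    (hc : ∀ y ∈ YY, c y = 1) : Cohom v (twist v c hc) :=
  ⟨fun z => (c z)⁻¹, fun y hy => by show (c y)⁻¹ = 1; rw [hc y hy]; group, fun {x y} p hp => by
    show (c x)⁻¹ * v.toFun p hp * c y = (c x)⁻¹ * v.toFun p hp * ((c y)⁻¹)⁻¹
    group⟩

end NCocycle


open NCocycle in
/-- Suppose X = U ∪ V with U, V path-connected open subsets and U ∩ V
having the m+1 path components A 0, …, A m (m ≥ 1), with a i ∈ A i and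
Y = {a 0, …, a m}.  Then the square of restriction maps from H¹(X,Y;G) to H¹(U,Y;G) and
H¹(V,Y;G), and from these to H¹(U∩V,Y;G), is commutative and cartesian; moreover
H¹(U∩V,Y;G) is canonically in bijection with the product ∏ᵢ H¹(Aᵢ,aᵢ;G) via the
restriction maps. -/
theorem statement18 (X : Type) [TopologicalSpace X] (G : Type) [Group G]
    (U V : Set X) (hUo : IsOpen U) (hVo : IsOpen V)
    (hUc : IsPathConnected U) (hVc : IsPathConnected V) (hcover : U ∪ V = Set.univ)
    (m : ℕ) (hm : 1 ≤ m)
    (A : Fin (m + 1) → Set X) (a : Fin (m + 1) → X)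
    (haUV : ∀ i, a i ∈ U ∩ V)
    (hAcomp : ∀ i, A i = pathComponentIn (U ∩ V) (a i))
    (hAunion : (⋃ i, A i) = U ∩ V)
    (hAne : ∀ i j, i ≠ j → A i ≠ A j) :
    -- the square commutes
    (∀ h : H1 (Set.univ : Set X) (Set.range a) G,
        H1res Set.inter_subset_left subset_rfl
            (H1res (Set.subset_univ U) subset_rfl h)
          = H1res Set.inter_subset_right subset_rfl
            (H1res (Set.subset_univ V) subset_rfl h)) ∧
    -- the square is cartesian: injectivity
    (∀ h h' : H1 (Set.univ : Set X) (Set.range a) G,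
        H1res (Set.subset_univ U) subset_rfl h
            = H1res (Set.subset_univ U) subset_rfl h' →
        H1res (Set.subset_univ V) subset_rfl h
            = H1res (Set.subset_univ V) subset_rfl h' →
        h = h') ∧
    -- the square is cartesian: surjectivity onto the fibered product
    (∀ (α : H1 U (Set.range a) G) (β : H1 V (Set.range a) G),
        H1res Set.inter_subset_left subset_rfl α
          = H1res Set.inter_subset_right subset_rfl β →
        ∃ h : H1 (Set.univ : Set X) (Set.range a) G,
          H1res (Set.subset_univ U) subset_rfl h = α ∧
          H1res (Set.subset_univ V) subset_rfl h = β) ∧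
    -- H¹(U∩V, Y; G) is canonically the product of the H¹(A i, a i; G)
    (∃ Φ : H1 (U ∩ V) (Set.range a) G ≃ (∀ i, H1 (A i) {a i} G),
      ∀ (u : NCocycle (U ∩ V) (Set.range a) G) (i : Fin (m + 1)),
        Φ (Quot.mk _ u) i
          = Quot.mk _ (res
              (by rw [hAcomp i]; exact pathComponentIn_subset)
              (Set.singleton_subset_iff.mpr (Set.mem_range_self i)) u)) := by
    classical
  have hcover' : ∀ z : X, z ∈ U ∨ z ∈ V := fun z => by
    have hz : z ∈ U ∪ V := hcover ▸ Set.mem_univ z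
    exact hz
  have haA : ∀ i, a i ∈ A i := fun i => by
    rw [hAcomp i]
    exact mem_pathComponentIn_self (haUV i)
  have hYU : Set.range a ⊆ U := by rintro w ⟨i, rfl⟩; exact (haUV i).1
  have hYV : Set.range a ⊆ V := by rintro w ⟨i, rfl⟩; exact (haUV i).2
  have hAsub : ∀ i, A i ⊆ U ∩ V := fun i => by
    rw [hAcomp i]; exact pathComponentIn_subset
  have hsing : ∀ i, ({a i} : Set X) ⊆ Set.range a := fun i =>
    Set.singleton_subset_iff.mpr (Set.mem_range_self i)
  refine ⟨?_, ?_, ?_, ?_⟩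
  · -- the square commutes
    intro h
    obtain ⟨u, rfl⟩ := Quot.exists_rep h
    rfl
  · -- injectivity
    intro h h' hU hV
    obtain ⟨u, rfl⟩ := Quot.exists_rep h
    obtain ⟨u', rfl⟩ := Quot.exists_rep h'
    apply Quot.sound
    refine cohom_univ_of_uv hUo hVo hcover' (fun z hz => ⟨hYU hz, hYV hz⟩)
      ?_ (cohom_of_h1_eq hU) (cohom_of_h1_eq hV)
    intro z hz
    obtain ⟨i, hi⟩ := Set.mem_iUnion.mp (hAunion ▸ hz)
    rw [hAcomp i] at hi
    exact ⟨a i, Set.mem_range_self i, hi⟩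
  · -- surjectivity onto the fibered product
    intro α β hαβ
    obtain ⟨u₀, rfl⟩ := Quot.exists_rep α
    obtain ⟨v₀, rfl⟩ := Quot.exists_rep β
    obtain ⟨c, hc1, hcrel⟩ : Cohom (res Set.inter_subset_left subset_rfl u₀)
        (res Set.inter_subset_right subset_rfl v₀) := cohom_of_h1_eq hαβ
    set v' : NCocycle V (Set.range a) G := twist v₀ c hc1 with hv'
    have hagree : Agrees u₀ v' := by
      intro x y q hqU hqV
      have hq : Set.range q ⊆ U ∩ V := Set.subset_inter hqU hqV
      have h := hcrel q hq
      have e1 : (res Set.inter_subset_right subset_rfl v₀).toFun q hq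
          = v₀.toFun q hqV := rfl
      have e2 : (res Set.inter_subset_left subset_rfl u₀).toFun q hq
          = u₀.toFun q hqU := rfl
      rw [e1, e2] at h
      show u₀.toFun q hqU = (c x)⁻¹ * v₀.toFun q hqV * c y
      rw [h]
      group
    refine ⟨Quot.mk _ (glueCocycle u₀ v' hUo hVo hcover' hagree hYU), ?_, ?_⟩
    · show Quot.mk _ (res (Set.subset_univ U) subset_rfl
        (glueCocycle u₀ v' hUo hVo hcover' hagree hYU)) = Quot.mk _ u₀
      apply Quot.sound
      refine ⟨fun _ => 1, fun _ _ => rfl, ?_⟩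
      intro x y p hp
      rw [show (res (Set.subset_univ U) subset_rfl
          (glueCocycle u₀ v' hUo hVo hcover' hagree hYU)).toFun p hp
          = glue u₀ v' hUo hVo hcover' p from rfl,
        glue_onU hUo hVo hcover' hagree p hp]
      group
    · have h1 : Quot.mk _ (res (Set.subset_univ V) subset_rfl
          (glueCocycle u₀ v' hUo hVo hcover' hagree hYU))
          = (Quot.mk _ v' : H1 V (Set.range a) G) := by
        apply Quot.sound
        refine ⟨fun _ => 1, fun _ _ => rfl, ?_⟩
        intro x y p hp
        rw [show (res (Set.subset_univ V) subset_rfl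
            (glueCocycle u₀ v' hUo hVo hcover' hagree hYU)).toFun p hp
            = glue u₀ v' hUo hVo hcover' p from rfl,
          glue_onV hUo hVo hcover' hagree p hp]
        group
      have h2 : (Quot.mk _ v' : H1 V (Set.range a) G) = Quot.mk _ v₀ :=
        Quot.sound ((cohom_equivalence V (Set.range a)).symm (cohom_twist v₀ c hc1))
      exact h1.trans h2
  · -- the product decomposition
    refine ⟨{
      toFun := fun h i => H1res (hAsub i) (hsing i) h
      invFun := fun hs => Quot.mk _ (prodGlue A a hAcomp hAne hAunion haA
        (fun i => (Quot.exists_rep (hs i)).choose))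
      left_inv := ?_
      right_inv := ?_ }, fun u i => rfl⟩
    · intro h
      obtain ⟨w₀, rfl⟩ := Quot.exists_rep h
      set us : ∀ i, NCocycle (A i) {a i} G := fun i =>
        (Quot.exists_rep (H1res (hAsub i) (hsing i) (Quot.mk _ w₀))).choose with hus
      have hspec : ∀ i, (Quot.mk _ (us i) : H1 (A i) {a i} G)
          = Quot.mk _ (res (hAsub i) (hsing i) w₀) := fun i =>
        (Quot.exists_rep (H1res (hAsub i) (hsing i) (Quot.mk _ w₀))).choose_spec
      have hcoh : ∀ i, Cohom (us i) (res (hAsub i) (hsing i) w₀) := fun i =>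
        cohom_of_h1_eq (hspec i)
      choose cs hcs1 hcsrel using hcoh
      apply Quot.sound
      refine ⟨fun z => cs (pidx A z) z, ?_, ?_⟩
      · rintro w ⟨j, rfl⟩
        show cs (pidx A (a j)) (a j) = 1
        rw [pidx_spec hAcomp hAne (haA j)]
        exact hcs1 j (a j) rfl
      · intro x y p hp
        show w₀.toFun p hp = cs (pidx A x) x
          * (prodGlue A a hAcomp hAne hAunion haA us).toFun p hp * (cs (pidx A y) y)⁻¹
        have hx : x ∈ A (pidx A x) := mem_A_pidx hAunion (hp ⟨0, p.source⟩)
        have hrp : Set.range p ⊆ A (pidx A x) := range_in_component hAcomp p hp hx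
        have hpg : (prodGlue A a hAcomp hAne hAunion haA us).toFun p hp
            = (us (pidx A x)).toFun p hrp :=
          pgFun_eq hAcomp hAne hAunion us p hp hrp
        have hrel := hcsrel (pidx A x) p hrp
        have he : (res (hAsub (pidx A x)) (hsing (pidx A x)) w₀).toFun p hrp
            = w₀.toFun p hp := rfl
        rw [he] at hrel
        rw [hpg, hrel]
        have hy : pidx A y = pidx A x := pidx_spec hAcomp hAne (hrp ⟨1, p.target⟩)
        rw [hy]
    · intro hs
      funext i
      set us : ∀ j, NCocycle (A j) {a j} G := fun j =>
        (Quot.exists_rep (hs j)).choose with hus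
      have hspec : ∀ j, (Quot.mk _ (us j) : H1 (A j) {a j} G) = hs j := fun j =>
        (Quot.exists_rep (hs j)).choose_spec
      show Quot.mk _ (res (hAsub i) (hsing i)
        (prodGlue A a hAcomp hAne hAunion haA us)) = hs i
      rw [← hspec i]
      apply Quot.sound
      refine ⟨fun _ => 1, fun _ _ => rfl, ?_⟩
      intro x y p hp
      have he : (res (hAsub i) (hsing i)
          (prodGlue A a hAcomp hAne hAunion haA us)).toFun p hp
          = (us i).toFun p hp :=
        pgFun_eq hAcomp hAne hAunion us p (hp.trans (hAsub i)) hp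
      rw [he]
      group
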